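/- Vacuous regime of the abstain game: if 0 < α < 1/2 and α ≤ (1/2)·(1 - nλ/∑_{i=1}^n |a_i|), then V_abst = α. -/
import Mathlib


open Finset

/-- Expected loss of the abstain game with abstention cost `α`,
abstain probabilities `p`, prediction `g`, and labels `z`. -/
noncomputable def Labst (n : ℕ) (α : ℝ) (p g z : ℕ → ℝ) : ℝ :=
  (1 / (n : ℝ)) * ∑ i ∈ Icc 1 n,
    (p i * α + (1 / 2) * (1 - p i) * (1 - g i * z i))

/-- The value of the abstain game. -/
noncomputable def Vabst (n : ℕ) (a : ℕ → ℝ) (lam α : ℝ) : ℝ :=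
  sInf {x : ℝ | ∃ p : ℕ → ℝ, (∀ i ∈ Icc 1 n, 0 ≤ p i ∧ p i ≤ 1) ∧
    ∃ g : ℕ → ℝ, (∀ i ∈ Icc 1 n, |g i| ≤ 1) ∧
      x = sSup {y : ℝ | ∃ z : ℕ → ℝ, (∀ i ∈ Icc 1 n, |z i| ≤ 1) ∧
        lam ≤ (1 / (n : ℝ)) * ∑ i ∈ Icc 1 n, z i * a i ∧
        y = Labst n α p g z}}

lemma abstain_term_lb (pi al giz t : ℝ) (hp1 : pi ≤ 1)
    (hgz : giz ≤ 2 * t - 1) (hta : al ≤ 1 - t) :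
    al ≤ pi * al + 1 / 2 * (1 - pi) * (1 - giz) := by
  have h5 : 2 * al ≤ 1 - giz := by linarith
  have h6 : (1 - pi) * (2 * al) ≤ (1 - pi) * (1 - giz) :=
    mul_le_mul_of_nonneg_left h5 (by linarith)
  nlinarith [h6]

set_option maxHeartbeats 1000000 in
/-- vacuous regime of the abstain game. -/
theorem abstain_game_vacuous_regime
    (n : ℕ) (hn : 1 ≤ n) (a : ℕ → ℝ)
    (hord : ∀ i j : ℕ, 1 ≤ i → i ≤ j → j ≤ n → |a j| ≤ |a i|)
    (lam : ℝ) (hlam_pos : 0 < lam)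
    (hlam_le : lam ≤ (1 / (n : ℝ)) * ∑ i ∈ Icc 1 n, |a i|)
    (α : ℝ) (hα0 : 0 < α) (hαhalf : α < 1 / 2)
    (hαsmall : α ≤ (1 / 2) * (1 - (n : ℝ) * lam / ∑ i ∈ Icc 1 n, |a i|)) :
    Vabst n a lam α = α := by
  classical
  have hn0 : (0 : ℝ) < n := by exact_mod_cast hn
  set A := ∑ i ∈ Icc 1 n, |a i| with hA_def
  have hA : 0 < A := by
    have h1 : 0 < (1 / (n : ℝ)) * A := lt_of_lt_of_le hlam_pos hlam_le
    have h2 : (n : ℝ) * ((1 / (n : ℝ)) * A) = A := by field_simp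
    nlinarith [mul_pos hn0 h1]
  have hnlamA : (n : ℝ) * lam ≤ A := by
    have h := mul_le_mul_of_nonneg_left hlam_le hn0.le
    have h2 : (n : ℝ) * ((1 / (n : ℝ)) * A) = A := by field_simp
    linarith
  set t : ℝ := (1 + (n : ℝ) * lam / A) / 2 with ht_def
  have hfrac0 : 0 < (n : ℝ) * lam / A := div_pos (mul_pos hn0 hlam_pos) hA
  have hfrac1 : (n : ℝ) * lam / A ≤ 1 := (div_le_one hA).2 hnlamA
  have ht1 : t ≤ 1 := by rw [ht_def]; linarith
  have ht0 : 1 / 2 ≤ t := by rw [ht_def]; linarith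
  have htα : α ≤ 1 - t := by
    have h2 : (1 : ℝ) / 2 * (1 - (n : ℝ) * lam / A) = 1 - t := by rw [ht_def]; ring
    linarith
  have hcard : (Icc 1 n).card = n := by simp [Nat.card_Icc]
  -- sign of a
  set s : ℕ → ℝ := fun i => if 0 ≤ a i then 1 else -1 with hs_def
  have hs_abs : ∀ i, |s i| = 1 := by
    intro i; simp only [hs_def]; split_ifs <;> norm_num
  have hsa : ∀ i, s i * a i = |a i| := by
    intro i; simp only [hs_def]; split_ifs with h
    · simp [abs_of_nonneg h]
    · rw [abs_of_neg (lt_of_not_ge h)]; ring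
  -- Key lower bound: any opponent value is at least α
  have hkey : ∀ p g : ℕ → ℝ, (∀ i ∈ Icc 1 n, 0 ≤ p i ∧ p i ≤ 1) →
      (∀ i ∈ Icc 1 n, |g i| ≤ 1) →
      α ≤ sSup {y : ℝ | ∃ z : ℕ → ℝ, (∀ i ∈ Icc 1 n, |z i| ≤ 1) ∧
        lam ≤ (1 / (n : ℝ)) * ∑ i ∈ Icc 1 n, z i * a i ∧
        y = Labst n α p g z} := by
    intro p g hp hg
    set w : ℕ → ℝ := fun i => -(if 0 ≤ g i then 1 else -1) with hw_def
    have hw_abs : ∀ i, |w i| = 1 := by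
      intro i; simp only [hw_def]; split_ifs <;> norm_num
    have hgw : ∀ i, g i * w i = -|g i| := by
      intro i; simp only [hw_def]; split_ifs with h
      · rw [abs_of_nonneg h]; ring
      · rw [abs_of_neg (lt_of_not_ge h)]; ring
    set z : ℕ → ℝ := fun i => t * s i + (1 - t) * w i with hz_def
    have hz_abs : ∀ i ∈ Icc 1 n, |z i| ≤ 1 := by
      intro i _
      calc |z i| ≤ |t * s i| + |(1 - t) * w i| := abs_add_le _ _
        _ = |t| * |s i| + |1 - t| * |w i| := by rw [abs_mul, abs_mul]
        _ = t * 1 + (1 - t) * 1 := by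
            rw [hs_abs, hw_abs, abs_of_nonneg (by linarith), abs_of_nonneg (by linarith)]
        _ = 1 := by ring
    have hconstraint : (n : ℝ) * lam ≤ ∑ i ∈ Icc 1 n, z i * a i := by
      have hterm : ∀ i ∈ Icc 1 n, (2 * t - 1) * |a i| ≤ z i * a i := by
        intro i _
        have h1 : -|a i| ≤ w i * a i := by
          have h := neg_abs_le (w i * a i)
          rwa [abs_mul, hw_abs, one_mul] at h
        have h2 : z i * a i = t * |a i| + (1 - t) * (w i * a i) := by
          simp only [hz_def]
          rw [add_mul, mul_assoc, hsa, mul_assoc]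
        rw [h2]
        nlinarith
      have h2t : 2 * t - 1 = (n : ℝ) * lam / A := by rw [ht_def]; ring
      calc (n : ℝ) * lam = (2 * t - 1) * A := by
            rw [h2t, div_mul_cancel₀ _ hA.ne']
        _ = ∑ i ∈ Icc 1 n, (2 * t - 1) * |a i| := by rw [hA_def, Finset.mul_sum]
        _ ≤ _ := Finset.sum_le_sum hterm
    have hzfeas : lam ≤ (1 / (n : ℝ)) * ∑ i ∈ Icc 1 n, z i * a i := by
      have h := mul_le_mul_of_nonneg_left hconstraint
        (by positivity : (0 : ℝ) ≤ 1 / (n : ℝ))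
      have h2 : (1 / (n : ℝ)) * ((n : ℝ) * lam) = lam := by field_simp
      linarith
    have hloss : α ≤ Labst n α p g z := by
      have hterm : ∀ i ∈ Icc 1 n,
          α ≤ p i * α + (1 / 2) * (1 - p i) * (1 - g i * z i) := by
        intro i hi
        obtain ⟨hp0, hp1⟩ := hp i hi
        have hgi := hg i hi
        have hga : 0 ≤ |g i| := abs_nonneg _
        have hgz : g i * z i ≤ 2 * t - 1 := by
          have h1 : g i * z i = t * (g i * s i) + (1 - t) * (g i * w i) := by
            simp only [hz_def]; ring
          have h2 : g i * s i ≤ |g i| := by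
            have h := le_abs_self (g i * s i)
            rwa [abs_mul, hs_abs, mul_one] at h
          have h3 := hgw i
          nlinarith
        exact abstain_term_lb (p i) α (g i * z i) t hp1 hgz htα
      have hsum : (n : ℝ) * α ≤
          ∑ i ∈ Icc 1 n, (p i * α + (1 / 2) * (1 - p i) * (1 - g i * z i)) := by
        calc (n : ℝ) * α = ∑ _i ∈ Icc 1 n, α := by
              rw [Finset.sum_const, hcard, nsmul_eq_mul]
          _ ≤ _ := Finset.sum_le_sum hterm
      have h := mul_le_mul_of_nonneg_left hsum
        (by positivity : (0 : ℝ) ≤ 1 / (n : ℝ))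
      have h2 : (1 / (n : ℝ)) * ((n : ℝ) * α) = α := by field_simp
      unfold Labst
      linarith
    have hbdd : BddAbove {y : ℝ | ∃ z : ℕ → ℝ, (∀ i ∈ Icc 1 n, |z i| ≤ 1) ∧
        lam ≤ (1 / (n : ℝ)) * ∑ i ∈ Icc 1 n, z i * a i ∧
        y = Labst n α p g z} := by
      refine ⟨α + 1, ?_⟩
      rintro y ⟨z', hz', -, rfl⟩
      have hterm : ∀ i ∈ Icc 1 n,
          p i * α + (1 / 2) * (1 - p i) * (1 - g i * z' i) ≤ α + 1 := by
        intro i hi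
        obtain ⟨hp0, hp1⟩ := hp i hi
        have hgi := hg i hi
        have hzi := hz' i hi
        have h1 : |g i * z' i| ≤ 1 := by
          rw [abs_mul]
          exact mul_le_one₀ hgi (abs_nonneg _) hzi
        have h2 := abs_le.mp h1
        nlinarith [h2.1, h2.2]
      have hsum : ∑ i ∈ Icc 1 n, (p i * α + (1 / 2) * (1 - p i) * (1 - g i * z' i))
          ≤ (n : ℝ) * (α + 1) := by
        calc _ ≤ ∑ _i ∈ Icc 1 n, (α + 1) := Finset.sum_le_sum hterm
          _ = (n : ℝ) * (α + 1) := by rw [Finset.sum_const, hcard, nsmul_eq_mul]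
      have h := mul_le_mul_of_nonneg_left hsum
        (by positivity : (0 : ℝ) ≤ 1 / (n : ℝ))
      have h2 : (1 / (n : ℝ)) * ((n : ℝ) * (α + 1)) = α + 1 := by field_simp
      unfold Labst
      linarith
    exact hloss.trans (le_csSup hbdd ⟨z, hz_abs, hzfeas, rfl⟩)
  -- α is attained: p ≡ 1, g ≡ 0
  have hmemS : α ∈ {x : ℝ | ∃ p : ℕ → ℝ, (∀ i ∈ Icc 1 n, 0 ≤ p i ∧ p i ≤ 1) ∧
      ∃ g : ℕ → ℝ, (∀ i ∈ Icc 1 n, |g i| ≤ 1) ∧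
        x = sSup {y : ℝ | ∃ z : ℕ → ℝ, (∀ i ∈ Icc 1 n, |z i| ≤ 1) ∧
          lam ≤ (1 / (n : ℝ)) * ∑ i ∈ Icc 1 n, z i * a i ∧
          y = Labst n α p g z}} := by
    refine ⟨fun _ => 1, fun i _ => ⟨zero_le_one, le_refl 1⟩,
      fun _ => 0, fun i _ => by norm_num, ?_⟩
    have hval : ∀ z : ℕ → ℝ, Labst n α (fun _ => 1) (fun _ => 0) z = α := by
      intro z
      unfold Labst
      simp only [one_mul, sub_self, zero_mul, mul_zero, add_zero, zero_sub]
      rw [Finset.sum_const, hcard, nsmul_eq_mul]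
      field_simp
    have hset : {y : ℝ | ∃ z : ℕ → ℝ, (∀ i ∈ Icc 1 n, |z i| ≤ 1) ∧
        lam ≤ (1 / (n : ℝ)) * ∑ i ∈ Icc 1 n, z i * a i ∧
        y = Labst n α (fun _ => 1) (fun _ => 0) z} = {α} := by
      ext y
      simp only [Set.mem_setOf_eq, Set.mem_singleton_iff]
      constructor
      · rintro ⟨z, -, -, rfl⟩
        exact hval z
      · rintro rfl
        refine ⟨s, fun i _ => le_of_eq (hs_abs i), ?_, (hval s).symm⟩
        have hsum : ∑ i ∈ Icc 1 n, s i * a i = A := by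
          rw [hA_def]
          exact Finset.sum_congr rfl fun i _ => hsa i
        rw [hsum]
        exact hlam_le
    rw [hset, csSup_singleton]
  -- conclude
  unfold Vabst
  apply le_antisymm
  · exact csInf_le ⟨α, by rintro x ⟨p, hp, g, hg, rfl⟩; exact hkey p g hp hg⟩ hmemS
  · exact le_csInf ⟨α, hmemS⟩ (by rintro x ⟨p, hp, g, hg, rfl⟩; exact hkey p g hp hg)
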